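/- arXiv:2010.06392 — 5 statements merged into one kernel-verified Lean document; each statement's English description precedes it below -/
import Mathlib

section
/- Let B ∈ ℂ^{m×n}, E ∈ ℂ^{s×n}, A = [B; E]. Let σ̂ be a singular value of A with σ̂² not an eigenvalue of BB^H, and û = [f; y] a corresponding left singular vector. Then y satisfies the nonlinear eigenvalue equation [E (Σ_{j=1}^{n} v^{(j)} (v^{(j)})^H σ̂²/(σ̂² - σ_j²)) E^H - σ̂² I_s] y = 0, where (σ_j, v^{(j)}) are the singular values and right singular vectors of B (with σ_j = 0 for j > min(m,n)). -/
/-!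
Put `λ = σ'²` and `x = Aᴴ [f; y] = Bᴴ f + Eᴴ y`. The singular vector equation splits into
`B x = λ f` and `E x = λ y`, so `(BᴴB - λ) x = λ Bᴴ f - λ x = -λ Eᴴ y`. As `λ` is not an eigenvalue
of `BᴴB = V diag(σⱼ²) Vᴴ`, this gives `x = -λ (BᴴB - λ)⁻¹ Eᴴ y`, and `E x = λ y` becomes the
claimed equation once the resolvent is diagonalised:
`-λ (BᴴB - λ)⁻¹ = V diag(λ / (λ - σⱼ²)) Vᴴ = Σⱼ vⱼ vⱼᴴ λ / (λ - σⱼ²)`.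
-/

open Matrix

section BlockEigenvector

variable {R : Type*} [CommRing R] {m n s : Type*} [Fintype m] [Fintype n] [Fintype s]
  [DecidableEq n] [DecidableEq s]

theorem mulVec_eq_zero_of_fromRows_mul_fromCols_mulVec_eq_smul
    (B : Matrix m n R) (E : Matrix s n R) (C : Matrix n m R) (D : Matrix n s R) (μ : R)
    (f : m → R) (y : s → R)
    (h : (fromRows B E * fromCols C D) *ᵥ Sum.elim f y = μ • Sum.elim f y)
    (hN : IsUnit (C * B - μ • 1).det) :
    (E * (-μ • (C * B - μ • 1)⁻¹) * D - μ • 1) *ᵥ y = 0 := by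
  set x := C *ᵥ f + D *ᵥ y
  rw [← mulVec_mulVec, fromCols_mulVec_sumElim, fromRows_mulVec] at h
  have hBx : B *ᵥ x = μ • f := funext fun i => by simpa using congrFun h (.inl i)
  have hEx : E *ᵥ x = μ • y := funext fun i => by simpa using congrFun h (.inr i)
  have hNx : (C * B - μ • 1) *ᵥ x = -μ • (D *ᵥ y) := by
    rw [sub_mulVec, ← mulVec_mulVec, hBx, smul_mulVec, one_mulVec, mulVec_smul]
    simp only [x, smul_add, neg_smul]
    abel
  have hx : (-μ • (C * B - μ • 1)⁻¹) *ᵥ (D *ᵥ y) = x := by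
    rw [smul_mulVec, ← mulVec_smul, ← hNx, mulVec_mulVec, nonsing_inv_mul _ hN, one_mulVec]
  rw [sub_mulVec, ← mulVec_mulVec, ← mulVec_mulVec, hx, hEx, smul_mulVec, one_mulVec, sub_self]

end BlockEigenvector

section UnitaryDiagonal

variable {R : Type*} [CommRing R] [StarRing R] {n : Type*} [Fintype n] [DecidableEq n]

theorem sum_smul_vecMulVec_col_star_col (V : Matrix n n R) (c : n → R) :
    ∑ j, c j • vecMulVec (fun i => V i j) (star fun i => V i j) = V * diagonal c * Vᴴ := by
  ext i k
  rw [Matrix.sum_apply, mul_apply]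
  simp only [Matrix.smul_apply, vecMulVec_apply, Pi.star_apply, smul_eq_mul, mul_diagonal,
    conjTranspose_apply]
  exact Finset.sum_congr rfl fun j _ => by ring

variable {V : Matrix n n R} (hV : V ∈ unitaryGroup n R)
include hV

theorem unitary_mul_diagonal_mul_conjTranspose_sub_smul_one (d : n → R) (μ : R) :
    V * diagonal d * Vᴴ - μ • 1 = V * diagonal (fun j => d j - μ) * Vᴴ := by
  rw [← diagonal_sub, Matrix.mul_sub, Matrix.sub_mul, ← smul_one_eq_diagonal, Matrix.mul_smul,
    Matrix.smul_mul, Matrix.mul_one, ← star_eq_conjTranspose, Unitary.mul_star_self_of_mem hV]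

theorem unitary_mul_diagonal_mul_conjTranspose_mul (a b : n → R) :
    V * diagonal a * Vᴴ * (V * diagonal b * Vᴴ) = V * diagonal (fun j => a j * b j) * Vᴴ := by
  rw [← diagonal_mul_diagonal]
  calc V * diagonal a * Vᴴ * (V * diagonal b * Vᴴ)
      = V * diagonal a * (Vᴴ * V) * diagonal b * Vᴴ := by simp only [Matrix.mul_assoc]
    _ = V * (diagonal a * diagonal b) * Vᴴ := by
      rw [← star_eq_conjTranspose, Unitary.star_mul_self_of_mem hV, Matrix.mul_one,
        Matrix.mul_assoc V]

end UnitaryDiagonal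

theorem unitary_mul_diagonal_mul_conjTranspose_mul_inv {K : Type*} [Field K] [StarRing K]
    {n : Type*} [Fintype n] [DecidableEq n] {V : Matrix n n K} (hV : V ∈ unitaryGroup n K)
    {d : n → K} (hd : ∀ j, d j ≠ 0) :
    V * diagonal d * Vᴴ * (V * diagonal (fun j => (d j)⁻¹) * Vᴴ) = 1 := by
  have hdd : (fun j => d j * (d j)⁻¹) = fun _ => 1 := funext fun j => mul_inv_cancel₀ (hd j)
  rw [unitary_mul_diagonal_mul_conjTranspose_mul hV, hdd, diagonal_one, Matrix.mul_one,
    ← star_eq_conjTranspose, Unitary.mul_star_self_of_mem hV]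

theorem bottom_block_nonlinear_eigenvalue_equation_general {m n s : ℕ}
    (B : Matrix (Fin m) (Fin n) ℂ) (E : Matrix (Fin s) (Fin n) ℂ)
    (A : Matrix (Fin m ⊕ Fin s) (Fin n) ℂ) (hA : A = fromRows B E)
    (V : Matrix (Fin n) (Fin n) ℂ) (hV : V ∈ Matrix.unitaryGroup (Fin n) ℂ)
    (σ : Fin n → ℝ)
    (hBHB : Bᴴ * B = V * diagonal (fun j => ((σ j) ^ 2 : ℂ)) * Vᴴ)
    (σ' : ℝ) (f : Fin m → ℂ) (y : Fin s → ℂ)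
    (hne : ∀ j, σ' ^ 2 ≠ (σ j) ^ 2)
    (hsv : (A * Aᴴ) *ᵥ Sum.elim f y = ((σ' : ℂ) ^ 2) • Sum.elim f y) :
    (E * (∑ j, ((σ' ^ 2 / (σ' ^ 2 - (σ j) ^ 2) : ℝ) : ℂ) •
          vecMulVec (fun i => V i j) (star fun i => V i j)) * Eᴴ -
        ((σ' : ℂ) ^ 2) • (1 : Matrix (Fin s) (Fin s) ℂ)) *ᵥ y = 0 := by
  subst hA
  rw [conjTranspose_fromRows_eq_fromCols_conjTranspose] at hsv
  set μ : ℂ := (σ' : ℂ) ^ 2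
  have hshift_ne : ∀ j, (σ j : ℂ) ^ 2 - μ ≠ 0 := fun j =>
    sub_ne_zero.mpr (by simp only [μ]; exact_mod_cast (hne j).symm)
  have hN : Bᴴ * B - μ • 1 = V * diagonal (fun j => (σ j : ℂ) ^ 2 - μ) * Vᴴ := by
    rw [hBHB, unitary_mul_diagonal_mul_conjTranspose_sub_smul_one hV]
  have hN_mul := unitary_mul_diagonal_mul_conjTranspose_mul_inv hV hshift_ne
  rw [← hN] at hN_mul
  have hresolvent : ∑ j, ((σ' ^ 2 / (σ' ^ 2 - (σ j) ^ 2) : ℝ) : ℂ) •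
      vecMulVec (fun i => V i j) (star fun i => V i j) = -μ • (Bᴴ * B - μ • 1)⁻¹ := by
    rw [sum_smul_vecMulVec_col_star_col, inv_eq_right_inv hN_mul, ← Matrix.smul_mul,
      ← Matrix.mul_smul, ← diagonal_smul]
    congr 3
    funext j
    simp only [Pi.smul_apply, smul_eq_mul, μ]
    push_cast
    rw [← neg_sub, div_neg, neg_mul, div_eq_mul_inv]
  rw [hresolvent]
  exact mulVec_eq_zero_of_fromRows_mul_fromCols_mulVec_eq_smul B E Bᴴ Eᴴ μ f y hsv
    (isUnit_det_of_right_inverse hN_mul)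

/-- Proposition 1 (bottom block equation): the bottom block `y` of a left singular vector
of `A = [B; E]` satisfies the nonlinear eigenvalue equation
`[E (Σⱼ vⱼvⱼᴴ σ'²/(σ'² - σⱼ²)) Eᴴ - σ'² I] y = 0`, where `(σⱼ, vⱼ)` are the singular
values (extended by zero) and right singular vectors of `B`. -/
theorem bottom_block_nonlinear_eigenvalue_equation {m n s : ℕ}
    (B : Matrix (Fin m) (Fin n) ℂ) (E : Matrix (Fin s) (Fin n) ℂ)
    (A : Matrix (Fin m ⊕ Fin s) (Fin n) ℂ) (hA : A = fromRows B E)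
    (V : Matrix (Fin n) (Fin n) ℂ) (hV : V ∈ Matrix.unitaryGroup (Fin n) ℂ)
    (σ : Fin n → ℝ)
    (hBHB : Bᴴ * B = V * diagonal (fun j => ((σ j) ^ 2 : ℂ)) * Vᴴ)
    (σ' : ℝ) (f : Fin m → ℂ) (y : Fin s → ℂ)
    (hne : ∀ j, σ' ^ 2 ≠ (σ j) ^ 2)
    (hinv : IsUnit (B * Bᴴ - ((σ' : ℂ) ^ 2) • (1 : Matrix (Fin m) (Fin m) ℂ)))
    (hunit : ∑ i, Complex.normSq (Sum.elim f y i) = 1)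
    (hsv : (A * Aᴴ) *ᵥ Sum.elim f y = ((σ' : ℂ) ^ 2) • Sum.elim f y) :
    (E * (∑ j, ((σ' ^ 2 / (σ' ^ 2 - (σ j) ^ 2) : ℝ) : ℂ) •
          vecMulVec (fun i => V i j) (star fun i => V i j)) * Eᴴ -
        ((σ' : ℂ) ^ 2) • (1 : Matrix (Fin s) (Fin s) ℂ)) *ᵥ y = 0 :=
  bottom_block_nonlinear_eigenvalue_equation_general B E A hA V hV σ hBHB σ' f y hne hsv
end

section
/- Let B ∈ ℂ^{m×n} with left singular vectors u^{(1)},...,u^{(min(m,n))}, singular values σ_j, and right singular vectors v^{(j)}. Let E ∈ ℂ^{s×n} and A = [B; E]. If û = [f; y] is a left singular vector of A with singular value σ̂ such that σ̂² ≠ σ_j² for all j, then f = Σ_j χ_j u^{(j)} with coefficients χ_j = -(E v^{(j)})^H y · σ_j/(σ_j² - σ̂²); equivalently, the top block f of û lies in the span of the left singular vectors of B. -/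
/-! The top block of `A Aᴴ û = σ̂² û` reads `(B Bᴴ - σ̂²) f = -B Eᴴ y`. Writing
`B = Σⱼ σⱼ u⁽ʲ⁾ v⁽ʲ⁾ᴴ`, the right-hand side is `-Σⱼ σⱼ (E v⁽ʲ⁾)ᴴ y · u⁽ʲ⁾`, while `B Bᴴ - σ̂²`
scales each `u⁽ʲ⁾` by `σⱼ² - σ̂² ≠ 0`; inverting `B Bᴴ - σ̂²` yields the coefficients `χⱼ`. -/

open Matrix

section RankOneSum

variable {m n ι R : Type*} [Fintype ι] [CommRing R] [StarRing R]

lemma sum_smul_vecMulVec_mulVec [Fintype n] (c : ι → R) (u : ι → m → R) (v : ι → n → R)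
    (x : n → R) :
    (∑ j, c j • vecMulVec (u j) (star (v j))) *ᵥ x = ∑ j, (c j * (star (v j) ⬝ᵥ x)) • u j := by
  simp only [sum_mulVec, smul_mulVec, vecMulVec_mulVec, op_smul_eq_smul, smul_smul]

lemma sum_smul_vecMulVec_mulVec_of_orthonormal [Fintype n] [DecidableEq ι] (c : ι → R)
    (u : ι → m → R) {v : ι → n → R} (hv : ∀ i j, star (v i) ⬝ᵥ v j = if i = j then 1 else 0)
    (k : ι) :
    (∑ j, c j • vecMulVec (u j) (star (v j))) *ᵥ v k = c k • u k := by
  simp [sum_smul_vecMulVec_mulVec, hv]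

lemma conjTranspose_sum_smul_vecMulVec (c : ι → R) (u : ι → m → R) (v : ι → n → R) :
    (∑ j, c j • vecMulVec (u j) (star (v j)))ᴴ
      = ∑ j, star (c j) • vecMulVec (v j) (star (u j)) := by
  simp [conjTranspose_sum]

lemma mul_conjTranspose_mulVec_of_orthonormal [Fintype m] [Fintype n] [DecidableEq ι]
    {B : Matrix m n R} {c : ι → R} {u : ι → m → R} {v : ι → n → R}
    (hu : ∀ i j, star (u i) ⬝ᵥ u j = if i = j then 1 else 0)
    (hv : ∀ i j, star (v i) ⬝ᵥ v j = if i = j then 1 else 0)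
    (hB : B = ∑ j, c j • vecMulVec (u j) (star (v j))) (k : ι) :
    (B * Bᴴ) *ᵥ u k = (star (c k) * c k) • u k := by
  rw [← mulVec_mulVec, hB, conjTranspose_sum_smul_vecMulVec,
    sum_smul_vecMulVec_mulVec_of_orthonormal _ _ hu, mulVec_smul,
    sum_smul_vecMulVec_mulVec_of_orthonormal _ _ hv, smul_smul]

end RankOneSum

lemma top_block_of_fromRows_mul_conjTranspose_mulVec {m n s R : Type*} [Fintype m] [Fintype n]
    [Fintype s] [DecidableEq m] [CommRing R] [StarRing R] {B : Matrix m n R} {E : Matrix s n R}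
    {μ : R} {f : m → R} {y : s → R}
    (h : (fromRows B E * (fromRows B E)ᴴ) *ᵥ Sum.elim f y = μ • Sum.elim f y) :
    (B * Bᴴ - μ • 1) *ᵥ f = -(B *ᵥ (Eᴴ *ᵥ y)) := by
  rw [← mulVec_mulVec, conjTranspose_fromRows_eq_fromCols_conjTranspose, fromCols_mulVec_sumElim,
    fromRows_mulVec] at h
  have htop : B *ᵥ (Bᴴ *ᵥ f + Eᴴ *ᵥ y) = μ • f :=
    funext fun i => by simpa using congrFun h (Sum.inl i)
  rw [sub_mulVec, smul_mulVec, one_mulVec, ← mulVec_mulVec, ← htop, mulVec_add]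
  abel

lemma eq_sum_div_smul_of_mulVec_eq {m ι K : Type*} [Fintype m] [DecidableEq m] [Fintype ι]
    [Field K] {M : Matrix m m K} (hM : IsUnit M) {u : ι → m → K} {d b : ι → K}
    (hu : ∀ j, M *ᵥ u j = d j • u j) (hd : ∀ j, d j ≠ 0) {f : m → K}
    (hf : M *ᵥ f = ∑ j, b j • u j) :
    f = ∑ j, (b j / d j) • u j := by
  refine mulVec_injective_iff_isUnit.2 hM ?_
  simp only [hf, mulVec_sum, mulVec_smul, hu, smul_smul, div_mul_cancel₀ _ (hd _)]

theorem top_block_expansion_in_left_singular_vectors_general {m n s : ℕ}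
    (B : Matrix (Fin m) (Fin n) ℂ) (E : Matrix (Fin s) (Fin n) ℂ)
    (A : Matrix (Fin m ⊕ Fin s) (Fin n) ℂ) (hA : A = fromRows B E)
    (u : Fin (Nat.min m n) → Fin m → ℂ) (v : Fin (Nat.min m n) → Fin n → ℂ)
    (σ : Fin (Nat.min m n) → ℝ)
    (hu : ∀ i j, star (u i) ⬝ᵥ u j = if i = j then 1 else 0)
    (hv : ∀ i j, star (v i) ⬝ᵥ v j = if i = j then 1 else 0)
    (hB : B = ∑ j, ((σ j : ℝ) : ℂ) • vecMulVec (u j) (star (v j)))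
    (σ' : ℝ) (f : Fin m → ℂ) (y : Fin s → ℂ)
    (hne : ∀ j, σ' ^ 2 ≠ (σ j) ^ 2)
    (hinv : IsUnit (B * Bᴴ - ((σ' : ℂ) ^ 2) • (1 : Matrix (Fin m) (Fin m) ℂ)))
    (hsv : (A * Aᴴ) *ᵥ Sum.elim f y = ((σ' : ℂ) ^ 2) • Sum.elim f y) :
    f = ∑ j, (-(star (E *ᵥ v j) ⬝ᵥ y) *
        ((σ j / ((σ j) ^ 2 - σ' ^ 2) : ℝ) : ℂ)) • u j := by
  subst hA
  have hMu : ∀ k, (B * Bᴴ - ((σ' : ℂ) ^ 2) • 1) *ᵥ u k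
      = ((σ k : ℂ) ^ 2 - (σ' : ℂ) ^ 2) • u k := by
    intro k
    rw [sub_mulVec, mul_conjTranspose_mulVec_of_orthonormal hu hv hB, smul_mulVec, one_mulVec,
      Complex.star_def, Complex.conj_ofReal, ← sq, sub_smul]
  have hd : ∀ k, (σ k : ℂ) ^ 2 - (σ' : ℂ) ^ 2 ≠ 0 := fun k =>
    sub_ne_zero.2 (by exact_mod_cast (hne k).symm)
  have hMf : (B * Bᴴ - ((σ' : ℂ) ^ 2) • 1) *ᵥ f
      = ∑ j, (-((σ j : ℂ) * (star (E *ᵥ v j) ⬝ᵥ y))) • u j := by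
    rw [top_block_of_fromRows_mul_conjTranspose_mulVec hsv, hB, sum_smul_vecMulVec_mulVec,
      ← Finset.sum_neg_distrib]
    simp only [dotProduct_mulVec, star_mulVec, neg_smul]
  rw [eq_sum_div_smul_of_mulVec_eq hinv hMu hd hMf]
  refine Finset.sum_congr rfl fun j _ => congrArg (· • u j) ?_
  push_cast
  ring

/-- Proposition 2: the top block `f` of a left singular vector of `A = [B; E]` expands in
the left singular vectors of `B` as `f = Σⱼ χⱼ u⁽ʲ⁾` with
`χⱼ = -(E v⁽ʲ⁾)ᴴ y ⬝ σⱼ/(σⱼ² - σ'²)`. -/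
theorem top_block_expansion_in_left_singular_vectors {m n s : ℕ}
    (B : Matrix (Fin m) (Fin n) ℂ) (E : Matrix (Fin s) (Fin n) ℂ)
    (A : Matrix (Fin m ⊕ Fin s) (Fin n) ℂ) (hA : A = fromRows B E)
    (u : Fin (Nat.min m n) → Fin m → ℂ) (v : Fin (Nat.min m n) → Fin n → ℂ)
    (σ : Fin (Nat.min m n) → ℝ)
    (hu : ∀ i j, star (u i) ⬝ᵥ u j = if i = j then 1 else 0)
    (hv : ∀ i j, star (v i) ⬝ᵥ v j = if i = j then 1 else 0)
    (hB : B = ∑ j, ((σ j : ℝ) : ℂ) • vecMulVec (u j) (star (v j)))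
    (σ' : ℝ) (f : Fin m → ℂ) (y : Fin s → ℂ)
    (hne : ∀ j, σ' ^ 2 ≠ (σ j) ^ 2)
    (hinv : IsUnit (B * Bᴴ - ((σ' : ℂ) ^ 2) • (1 : Matrix (Fin m) (Fin m) ℂ)))
    (hunit : ∑ i, Complex.normSq (Sum.elim f y i) = 1)
    (hsv : (A * Aᴴ) *ᵥ Sum.elim f y = ((σ' : ℂ) ^ 2) • Sum.elim f y) :
    f = ∑ j, (-(star (E *ᵥ v j) ⬝ᵥ y) *
        ((σ j / ((σ j) ^ 2 - σ' ^ 2) : ℝ) : ℂ)) • u j :=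
  top_block_expansion_in_left_singular_vectors_general B E A hA u v σ hu hv hB σ' f y hne hinv hsv
end

section
/- Let B ∈ ℂ^{m×n}, E ∈ ℂ^{s×n}, A = [B; E], and let û = [f; y] be a unit left singular vector of A with singular value σ̂. Suppose σ̂² is not an eigenvalue of BB^H and λ ∈ ℝ exceeds all eigenvalues of BB^H restricted to the orthogonal complement of the top-k left singular subspace. Then û = [[U_k, 0],[0, I_s]] · [χ_{1},...,χ_{k}, y]^T - [B(λ) Σ_{ρ=0}^{∞} ((σ̂² - λ) B(λ))^ρ B E^H y; 0], where χ_j = -(E v^{(j)})^H y · σ_j/(σ_j² - σ̂²) and B(λ) = (I_m - U_k U_k^H)(BB^H - λ I_m)^{-1}, provided the series converges. -/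
/-!
The first block row of `A Aᴴ û = σ̂² û` reads `(B Bᴴ - σ̂² I) f = -B Eᴴ y`. Pairing it with
`u_jᴴ`, a left singular vector of `B`, gives `u_jᴴ f = χ_j`, so `P f = Σ_j χ_j u_j` for the
projection `P = U_k U_kᴴ`. Since `P` commutes with `B Bᴴ`, `X = B(λ) = (I - P)(B Bᴴ - λ I)⁻¹`
satisfies `X (B Bᴴ - λ I) = I - P` and `X (I - P) = X`; with `B Bᴴ - σ̂² I = (B Bᴴ - λ I) - c I`,
`c = σ̂² - λ`, the series `X Σ_ρ (c X)^ρ (B Bᴴ - σ̂² I)` telescopes to `I - P`. Applying this to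
the block equation gives `(I - P) f = -X Σ_ρ (c X)^ρ B Eᴴ y`.
-/

open Matrix

theorem Summable.tsum_telescope {G : Type*} [AddCommGroup G] [TopologicalSpace G]
    [IsTopologicalAddGroup G] [T2Space G] {g : ℕ → G} (hg : Summable g) :
    ∑' ρ, (g ρ - g (ρ + 1)) = g 0 := by
  rw [hg.tsum_sub ((summable_nat_add_iff 1).mpr hg), hg.tsum_eq_zero_add, add_sub_cancel_right]

/-- `X` plays the role of `Q N⁻¹` for an idempotent `Q` commuting with `N`. -/
theorem mul_tsum_smul_pow_mul_sub_smul_one {𝕜 R : Type*} [CommSemiring 𝕜] [Ring R] [Algebra 𝕜 R]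
    [TopologicalSpace R] [IsTopologicalRing R] [T2Space R] {X N Q : R} {c : 𝕜}
    (hXN : X * N = Q) (hXQ : X * Q = X) (hsum : Summable fun ρ : ℕ => c ^ ρ • X ^ ρ) :
    X * (∑' ρ : ℕ, c ^ ρ • X ^ ρ) * (N - c • 1) = Q := by
  set g : ℕ → R := fun ρ => c ^ ρ • (X ^ ρ * Q)
  have hg : Summable g := by simpa only [g, smul_mul_assoc] using hsum.mul_right Q
  have hterm (ρ : ℕ) : X * (c ^ ρ • X ^ ρ) * (N - c • 1) = g ρ - g (ρ + 1) := by
    have hXXN : X * X ^ ρ * N = X ^ ρ * Q := by rw [← pow_succ', pow_succ, mul_assoc, hXN]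
    have hXXQ : X * X ^ ρ * Q = X * X ^ ρ := by rw [← pow_succ', pow_succ, mul_assoc, hXQ]
    simp only [g, mul_sub, mul_smul_comm, smul_mul_assoc, mul_one, hXXN, pow_succ', smul_smul,
      hXXQ, mul_comm c]
  calc X * (∑' ρ : ℕ, c ^ ρ • X ^ ρ) * (N - c • 1)
      = ∑' ρ : ℕ, X * (c ^ ρ • X ^ ρ) * (N - c • 1) := by
        rw [← hsum.tsum_mul_left, (hsum.mul_left X).tsum_mul_right]
    _ = g 0 := by rw [tsum_congr hterm, hg.tsum_telescope]
    _ = Q := by simp [g]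

section Resolvent

variable {p K : Type*} [Fintype p] [DecidableEq p] [CommRing K]

theorem IsIdempotentElem.mul_nonsing_inv_mul_self {Q N : Matrix p p K} (hQ : IsIdempotentElem Q)
    (hQN : Commute Q N) (hN : IsUnit N) : Q * N⁻¹ * Q = Q * N⁻¹ := by
  obtain ⟨U, rfl⟩ := hN
  rw [← coe_units_inv, mul_assoc, ← (hQN.units_inv_right (u := U)).eq, ← mul_assoc, hQ.eq]

theorem one_sub_mul_nonsing_inv_mul_tsum_mul_sub_smul_one [TopologicalSpace K]
    [IsTopologicalRing K] [T2Space K] {H P : Matrix p p K} {lam μ : K} (hP : IsIdempotentElem P)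
    (hPH : Commute P H) (hN : IsUnit (H - lam • 1))
    (hsum : Summable fun ρ : ℕ => (μ - lam) ^ ρ • ((1 - P) * (H - lam • 1)⁻¹) ^ ρ) :
    (1 - P) * (H - lam • 1)⁻¹ * (∑' ρ : ℕ, (μ - lam) ^ ρ • ((1 - P) * (H - lam • 1)⁻¹) ^ ρ) *
      (H - μ • 1) = 1 - P := by
  have hM : H - μ • 1 = H - lam • 1 - (μ - lam) • (1 : Matrix p p K) := by module
  rw [hM]
  refine mul_tsum_smul_pow_mul_sub_smul_one ?_ ?_ hsum
  · rw [mul_assoc, nonsing_inv_mul _ ((isUnit_iff_isUnit_det _).mp hN), mul_one]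
  · exact hP.one_sub.mul_nonsing_inv_mul_self
      ((Commute.one_left _).sub_left (hPH.sub_right ((Commute.one_right P).smul_right lam))) hN

end Resolvent

section Biorthogonal

variable {ι p q R : Type*} [Fintype ι] [DecidableEq ι] [Fintype p] [CommSemiring R]
  {u : ι → p → R} {b : ι → p → R}

theorem sum_smul_vecMulVec_mulVec_of_biorthogonal (a : ι → R) (w : ι → q → R)
    (hbu : ∀ i j, b i ⬝ᵥ u j = if i = j then 1 else 0) (j : ι) :
    (∑ i, a i • vecMulVec (w i) (b i)) *ᵥ u j = a j • w j := by
  simp [sum_mulVec, smul_mulVec, vecMulVec_mulVec, hbu]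

theorem vecMul_sum_smul_vecMulVec_of_biorthogonal (a : ι → R) (w : ι → q → R)
    (hbu : ∀ i j, b i ⬝ᵥ u j = if i = j then 1 else 0) (j : ι) :
    b j ᵥ* (∑ i, a i • vecMulVec (u i) (w i)) = a j • w j := by
  simp [vecMul_sum, vecMul_smul, vecMul_vecMulVec, hbu]

theorem isIdempotentElem_sum_vecMulVec_of_biorthogonal
    (hbu : ∀ i j, b i ⬝ᵥ u j = if i = j then 1 else 0) :
    IsIdempotentElem (∑ i, vecMulVec (u i) (b i)) := by
  simp [IsIdempotentElem, Finset.mul_sum, Finset.sum_mul, vecMulVec_mul_vecMulVec, hbu,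
    apply_ite (vecMulVec _)]

end Biorthogonal

theorem commute_vecMulVec_of_mulVec_of_vecMul {p R : Type*} [Fintype p] [CommSemiring R]
    {H : Matrix p p R} {a b : p → R} {μ : R} (ha : H *ᵥ a = μ • a) (hb : b ᵥ* H = μ • b) :
    Commute H (vecMulVec a b) := by
  rw [Commute, SemiconjBy, mul_vecMulVec, vecMulVec_mul, ha, hb, smul_vecMulVec, vecMulVec_smul]

section SingularTriple

variable {m n s R : Type*} [Fintype m] [CommRing R] [StarRing R]
  {B : Matrix m n R} {u : m → R} {v : n → R} {σ : R}

theorem conjTranspose_mulVec_of_star_vecMul (hσ : IsSelfAdjoint σ)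
    (huB : star u ᵥ* B = σ • star v) : Bᴴ *ᵥ u = σ • v := by
  rw [← star_star u, ← star_vecMul, huB, star_smul, star_star, hσ.star_eq]

variable [Fintype n]

theorem mul_conjTranspose_mulVec_of_singular (hσ : IsSelfAdjoint σ)
    (hBv : B *ᵥ v = σ • u) (huB : star u ᵥ* B = σ • star v) :
    (B * Bᴴ) *ᵥ u = σ ^ 2 • u := by
  rw [← mulVec_mulVec, conjTranspose_mulVec_of_star_vecMul hσ huB, mulVec_smul, hBv, smul_smul,
    sq]

theorem star_vecMul_mul_conjTranspose_of_singular (hσ : IsSelfAdjoint σ)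
    (hBv : B *ᵥ v = σ • u) (huB : star u ᵥ* B = σ • star v) :
    star u ᵥ* (B * Bᴴ) = σ ^ 2 • star u := by
  rw [← vecMul_vecMul, huB, smul_vecMul, ← star_mulVec, hBv, star_smul, hσ.star_eq, smul_smul,
    sq]

theorem mul_conjTranspose_sub_smul_one_mulVec_of_fromRows [Fintype s] [DecidableEq m]
    {E : Matrix s n R} {f : m → R} {y : s → R} {c : R}
    (h : (fromRows B E * (fromRows B E)ᴴ) *ᵥ Sum.elim f y = c • Sum.elim f y) :
    (B * Bᴴ - c • 1) *ᵥ f = -((B * Eᴴ) *ᵥ y) := by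
  rw [conjTranspose_fromRows_eq_fromCols_conjTranspose, ← mulVec_mulVec, fromCols_mulVec_sumElim,
    fromRows_mulVec] at h
  have htop : (B * Bᴴ) *ᵥ f + (B * Eᴴ) *ᵥ y = c • f := funext fun i => by
    simpa [mulVec_add, mulVec_mulVec] using congrFun h (Sum.inl i)
  rw [sub_mulVec, smul_mulVec, one_mulVec, ← htop]
  abel

end SingularTriple

theorem star_dotProduct_eq_of_sub_smul_one_mulVec_eq {K : Type*} [Field K] [StarRing K]
    {m n s : Type*} [Fintype m] [Fintype n] [Fintype s] [DecidableEq m] {B : Matrix m n K}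
    {u : m → K} {v : n → K} {σ c : K}
    (hσc : σ ^ 2 ≠ c) (huB : star u ᵥ* B = σ • star v)
    (huBB : star u ᵥ* (B * Bᴴ) = σ ^ 2 • star u) {E : Matrix s n K} {f : m → K} {y : s → K}
    (hf : (B * Bᴴ - c • 1) *ᵥ f = -((B * Eᴴ) *ᵥ y)) :
    star u ⬝ᵥ f = -(star (E *ᵥ v) ⬝ᵥ y) * (σ / (σ ^ 2 - c)) := by
  have hpair : star u ⬝ᵥ (B * Bᴴ - c • 1) *ᵥ f = (σ ^ 2 - c) * (star u ⬝ᵥ f) := by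
    rw [dotProduct_mulVec, vecMul_sub, huBB, vecMul_smul, vecMul_one, ← sub_smul, smul_dotProduct,
      smul_eq_mul]
  have hrhs : star u ⬝ᵥ (B * Eᴴ) *ᵥ y = σ * (star (E *ᵥ v) ⬝ᵥ y) := by
    rw [dotProduct_mulVec, ← vecMul_vecMul, huB, smul_vecMul, ← star_mulVec, smul_dotProduct,
      smul_eq_mul]
  rw [hf, dotProduct_neg, hrhs] at hpair
  field_simp [sub_ne_zero.mpr hσc]
  linear_combination -hpair

theorem left_singular_vector_resolvent_expression_general {m n s k : ℕ}
    (hkm : k ≤ Nat.min m n)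
    (B : Matrix (Fin m) (Fin n) ℂ) (E : Matrix (Fin s) (Fin n) ℂ)
    (A : Matrix (Fin m ⊕ Fin s) (Fin n) ℂ) (hA : A = fromRows B E)
    (u : Fin (Nat.min m n) → Fin m → ℂ) (v : Fin (Nat.min m n) → Fin n → ℂ)
    (σ : Fin (Nat.min m n) → ℝ)
    (hu : ∀ i j, star (u i) ⬝ᵥ u j = if i = j then 1 else 0)
    (hv : ∀ i j, star (v i) ⬝ᵥ v j = if i = j then 1 else 0)
    (hB : B = ∑ j, ((σ j : ℝ) : ℂ) • vecMulVec (u j) (star (v j)))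
    (σ' : ℝ) (f : Fin m → ℂ) (y : Fin s → ℂ)
    (hne : ∀ j, σ' ^ 2 ≠ (σ j) ^ 2)
    (hsv : (A * Aᴴ) *ᵥ Sum.elim f y = ((σ' : ℂ) ^ 2) • Sum.elim f y)
    (lam : ℝ)
    (hinvlam : IsUnit (B * Bᴴ - ((lam : ℝ) : ℂ) • (1 : Matrix (Fin m) (Fin m) ℂ)))
    (P Blam : Matrix (Fin m) (Fin m) ℂ)
    (hP : P = ∑ j : Fin k, vecMulVec (u (Fin.castLE hkm j)) (star (u (Fin.castLE hkm j))))
    (hBlam : Blam = (1 - P) * (B * Bᴴ - ((lam : ℝ) : ℂ) • (1 : Matrix (Fin m) (Fin m) ℂ))⁻¹)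
    (hconv : Summable fun ρ : ℕ => ((σ' ^ 2 - lam : ℝ) : ℂ) ^ ρ • Blam ^ ρ) :
    Sum.elim f y =
      Sum.elim
        (∑ j : Fin k, ((-(star (E *ᵥ v (Fin.castLE hkm j)) ⬝ᵥ y)) *
          ((σ (Fin.castLE hkm j) / ((σ (Fin.castLE hkm j)) ^ 2 - σ' ^ 2) : ℝ) : ℂ)) •
            u (Fin.castLE hkm j)) y -
      Sum.elim
        ((Blam * ∑' ρ : ℕ, ((σ' ^ 2 - lam : ℝ) : ℂ) ^ ρ • Blam ^ ρ) *ᵥ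
          ((B * Eᴴ) *ᵥ y)) 0 := by
  have hσ (j) : IsSelfAdjoint ((σ j : ℝ) : ℂ) := Complex.conj_ofReal _
  have hBv (j) : B *ᵥ v j = (σ j : ℂ) • u j := by
    rw [hB]; exact sum_smul_vecMulVec_mulVec_of_biorthogonal _ _ hv j
  have huB (j) : star (u j) ᵥ* B = (σ j : ℂ) • star (v j) := by
    rw [hB]; exact vecMul_sum_smul_vecMulVec_of_biorthogonal _ _ hu j
  have hf := mul_conjTranspose_sub_smul_one_mulVec_of_fromRows (hA ▸ hsv)
  have hPf : P *ᵥ f = ∑ j : Fin k, ((-(star (E *ᵥ v (Fin.castLE hkm j)) ⬝ᵥ y)) *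
      ((σ (Fin.castLE hkm j) / ((σ (Fin.castLE hkm j)) ^ 2 - σ' ^ 2) : ℝ) : ℂ)) •
        u (Fin.castLE hkm j) := by
    refine hP ▸ (sum_mulVec _ _ _).trans (Finset.sum_congr rfl fun j _ => ?_)
    rw [vecMulVec_mulVec, op_smul_eq_smul, star_dotProduct_eq_of_sub_smul_one_mulVec_eq
      (by exact_mod_cast (hne _).symm) (huB _)
      (star_vecMul_mul_conjTranspose_of_singular (hσ _) (hBv _) (huB _)) hf]
    norm_cast
  have hPidem : IsIdempotentElem P :=
    hP ▸ isIdempotentElem_sum_vecMulVec_of_biorthogonal fun i j => by simp [hu, Fin.castLE_inj]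
  have hPBB : Commute P (B * Bᴴ) :=
    hP ▸ Commute.sum_left _ _ _ fun j _ => (commute_vecMulVec_of_mulVec_of_vecMul
      (mul_conjTranspose_mulVec_of_singular (hσ _) (hBv _) (huB _))
      (star_vecMul_mul_conjTranspose_of_singular (hσ _) (hBv _) (huB _))).symm
  rw [Complex.ofReal_sub, Complex.ofReal_pow] at hconv ⊢
  subst hBlam
  rw [← hPf, ← neg_neg ((B * Eᴴ) *ᵥ y), ← hf, mulVec_neg, mulVec_mulVec,
    one_sub_mul_nonsing_inv_mul_tsum_mul_sub_smul_one hPidem hPBB hinvlam hconv, sub_mulVec,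
    one_mulVec]
  ext (i | i) <;> simp

/-- Proposition 4: expression of a left singular vector `û = [f; y]` of `A = [B; E]` via the
leading left singular vectors of `B` and the resolvent Neumann series, i.e.
`û = [[U_k,0],[0,I]]·[χ; y] - [B(λ) Σ_ρ ((σ'² - λ)B(λ))^ρ B Eᴴ y; 0]`. -/
theorem left_singular_vector_resolvent_expression {m n s k : ℕ}
    (hkm : k ≤ Nat.min m n)
    (B : Matrix (Fin m) (Fin n) ℂ) (E : Matrix (Fin s) (Fin n) ℂ)
    (A : Matrix (Fin m ⊕ Fin s) (Fin n) ℂ) (hA : A = fromRows B E)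
    (u : Fin (Nat.min m n) → Fin m → ℂ) (v : Fin (Nat.min m n) → Fin n → ℂ)
    (σ : Fin (Nat.min m n) → ℝ)
    (hu : ∀ i j, star (u i) ⬝ᵥ u j = if i = j then 1 else 0)
    (hv : ∀ i j, star (v i) ⬝ᵥ v j = if i = j then 1 else 0)
    (hB : B = ∑ j, ((σ j : ℝ) : ℂ) • vecMulVec (u j) (star (v j)))
    (hσanti : Antitone σ) (hσnn : ∀ j, 0 ≤ σ j)
    (σ' : ℝ) (f : Fin m → ℂ) (y : Fin s → ℂ)
    (hne : ∀ j, σ' ^ 2 ≠ (σ j) ^ 2)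
    (hinv : IsUnit (B * Bᴴ - ((σ' : ℂ) ^ 2) • (1 : Matrix (Fin m) (Fin m) ℂ)))
    (hunit : ∑ i, Complex.normSq (Sum.elim f y i) = 1)
    (hsv : (A * Aᴴ) *ᵥ Sum.elim f y = ((σ' : ℂ) ^ 2) • Sum.elim f y)
    (lam : ℝ)
    (hlamtail : ∀ j : Fin (Nat.min m n), k ≤ (j : ℕ) → (σ j) ^ 2 < lam)
    (hinvlam : IsUnit (B * Bᴴ - ((lam : ℝ) : ℂ) • (1 : Matrix (Fin m) (Fin m) ℂ)))
    (P Blam : Matrix (Fin m) (Fin m) ℂ)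
    (hP : P = ∑ j : Fin k, vecMulVec (u (Fin.castLE hkm j)) (star (u (Fin.castLE hkm j))))
    (hBlam : Blam = (1 - P) * (B * Bᴴ - ((lam : ℝ) : ℂ) • (1 : Matrix (Fin m) (Fin m) ℂ))⁻¹)
    (hconv : Summable fun ρ : ℕ => ((σ' ^ 2 - lam : ℝ) : ℂ) ^ ρ • Blam ^ ρ) :
    Sum.elim f y =
      Sum.elim
        (∑ j : Fin k, ((-(star (E *ᵥ v (Fin.castLE hkm j)) ⬝ᵥ y)) *
          ((σ (Fin.castLE hkm j) / ((σ (Fin.castLE hkm j)) ^ 2 - σ' ^ 2) : ℝ) : ℂ)) •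
            u (Fin.castLE hkm j)) y -
      Sum.elim
        ((Blam * ∑' ρ : ℕ, ((σ' ^ 2 - lam : ℝ) : ℂ) ^ ρ • Blam ^ ρ) *ᵥ
          ((B * Eᴴ) *ᵥ y)) 0 :=
  left_singular_vector_resolvent_expression_general hkm B E A hA u v σ hu hv hB σ' f y hne hsv lam
    hinvlam P Blam hP hBlam hconv
end

section
/- Let B ∈ ℂ^{m×n} have rank exactly k with compact SVD B = U_k Σ_k V_k^H, let E ∈ ℂ^{s×n}, and let (I - V_kV_k^H)E^H = QR be a QR factorization with Q having orthonormal columns. Then [B; E] = [[U_k, 0],[0, I_s]] · [[Σ_k, 0],[E V_k, R^H]] · [V_k, Q]^H, and consequently the Zha–Simon update computes the exact rank-k truncated SVD of A = [B; E]. -/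
open Matrix

/-! Conjugate-transposing the QR factorization gives `E = E V_k V_kᴴ + Rᴴ Qᴴ`. Multiplying out
the three block matrices row block by row block gives `[U_k Σ_k V_kᴴ; E V_k V_kᴴ + Rᴴ Qᴴ]`,
which is `[B; E]`. -/

theorem fromRows_mul_eq_fromBlocks_mul_fromBlocks_mul_fromRows {α : Type*} [Ring α]
    {m n s k l : Type*} [Fintype n] [Fintype k] [Fintype s] [Fintype l] [DecidableEq s]
    (U : Matrix m k α) (S : Matrix k k α) (W : Matrix k n α) (E : Matrix s n α)
    (V : Matrix n k α) (T : Matrix s l α) (X : Matrix l n α) (hE : E = E * V * W + T * X) :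
    fromRows (U * S * W) E = fromBlocks U 0 0 (1 : Matrix s s α) * fromBlocks S 0 (E * V) T *
      fromRows W X := by
  rw [Matrix.mul_assoc (fromBlocks U 0 0 1), fromBlocks_mul_fromRows, fromBlocks_mul_fromRows]
  simp only [Matrix.zero_mul, add_zero, zero_add, Matrix.one_mul, Matrix.mul_assoc]
  rw [← Matrix.mul_assoc E, ← hE]

theorem eq_mul_mul_conjTranspose_add_of_sub_mul_conjTranspose_mul_eq {α : Type*} [Ring α]
    [StarRing α] {n s k l : Type*} [Fintype n] [Fintype k] [Fintype l] [DecidableEq n]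
    (E : Matrix s n α) (V : Matrix n k α) (Q : Matrix n l α) (R : Matrix l s α)
    (hQR : (1 - V * Vᴴ) * Eᴴ = Q * R) :
    E = E * V * Vᴴ + Rᴴ * Qᴴ := by
  have h := congrArg conjTranspose hQR
  simp only [conjTranspose_mul, conjTranspose_sub, conjTranspose_one,
    conjTranspose_conjTranspose, Matrix.mul_sub, Matrix.mul_one] at h
  rw [← h, Matrix.mul_assoc, add_sub_cancel]

theorem zha_simon_row_update_exact_general {m n s k : ℕ}
    (B : Matrix (Fin m) (Fin n) ℂ) (E : Matrix (Fin s) (Fin n) ℂ)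
    (Uk : Matrix (Fin m) (Fin k) ℂ) (Vk : Matrix (Fin n) (Fin k) ℂ) (σk : Fin k → ℝ)
    (hB : B = Uk * diagonal (fun i => (σk i : ℂ)) * Vkᴴ)
    (Q : Matrix (Fin n) (Fin s) ℂ) (R : Matrix (Fin s) (Fin s) ℂ)
    (hQR : (1 - Vk * Vkᴴ) * Eᴴ = Q * R) :
    fromRows B E =
      fromBlocks Uk 0 0 (1 : Matrix (Fin s) (Fin s) ℂ) *
        fromBlocks (diagonal (fun i => (σk i : ℂ))) 0 (E * Vk) Rᴴ *
        (fromCols Vk Q)ᴴ := by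
  rw [conjTranspose_fromCols_eq_fromRows_conjTranspose, hB]
  exact fromRows_mul_eq_fromBlocks_mul_fromBlocks_mul_fromRows _ _ _ _ _ _ _
    (eq_mul_mul_conjTranspose_add_of_sub_mul_conjTranspose_mul_eq E Vk Q R hQR)

/-- Zha–Simon row update factorization: if `B = U_kΣ_kV_kᴴ` has rank exactly `k` and
`(I - V_kV_kᴴ)Eᴴ = QR` with `Q` having orthonormal columns, then
`[B; E] = [[U_k, 0],[0, I_s]] · [[Σ_k, 0],[E V_k, Rᴴ]] · [V_k, Q]ᴴ`; hence the Zha–Simon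
update recovers the exact rank-`k` truncated SVD of `A = [B; E]`. -/
theorem zha_simon_row_update_exact {m n s k : ℕ}
    (B : Matrix (Fin m) (Fin n) ℂ) (E : Matrix (Fin s) (Fin n) ℂ)
    (Uk : Matrix (Fin m) (Fin k) ℂ) (Vk : Matrix (Fin n) (Fin k) ℂ) (σk : Fin k → ℝ)
    (hUk : Ukᴴ * Uk = 1) (hVk : Vkᴴ * Vk = 1)
    (hB : B = Uk * diagonal (fun i => (σk i : ℂ)) * Vkᴴ)
    (hrank : B.rank = k)
    (Q : Matrix (Fin n) (Fin s) ℂ) (R : Matrix (Fin s) (Fin s) ℂ)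
    (hQ : Qᴴ * Q = 1)
    (hQR : (1 - Vk * Vkᴴ) * Eᴴ = Q * R) :
    fromRows B E =
      fromBlocks Uk 0 0 (1 : Matrix (Fin s) (Fin s) ℂ) *
        fromBlocks (diagonal (fun i => (σk i : ℂ))) 0 (E * Vk) Rᴴ *
        (fromCols Vk Q)ᴴ :=
  zha_simon_row_update_exact_general B E Uk Vk σk hB Q R hQR
end

section
/- Let B ∈ ℂ^{m×n} have rank exactly k with compact SVD B = U_kΣ_kV_k^H, let E ∈ ℂ^{m×s}, and let (I - U_kU_k^H)E = QR. Then [B, E] = [U_k, Q] · [[Σ_k, U_k^H E],[0, R]] · [[V_k^H, 0],[0, I_s]], so the column-update Zha–Simon scheme is exact. -/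
open Matrix

theorem Matrix.fromCols_mul_mul_eq_of_residual_eq {α m n k k' s t : Type*} [Ring α]
    [Fintype m] [DecidableEq m] [Fintype k] [Fintype k'] [Fintype s] [DecidableEq s] [Fintype t]
    (U : Matrix m k α) (W : Matrix k m α) (S : Matrix k k' α) (V : Matrix k' n α)
    (E : Matrix m s α) (Q : Matrix m t α) (R : Matrix t s α)
    (hres : (1 - U * W) * E = Q * R) :
    fromCols (U * S * V) E = fromCols U Q * fromBlocks S (W * E) 0 R *
      fromBlocks V 0 0 (1 : Matrix s s α) := by
  have hsplit : U * (W * E) + Q * R = E := by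
    rw [← hres, Matrix.sub_mul, Matrix.one_mul, Matrix.mul_assoc, add_sub_cancel]
  rw [fromCols_mul_fromBlocks, Matrix.mul_zero, add_zero, hsplit, fromCols_mul_fromBlocks]
  simp only [Matrix.mul_zero, add_zero, zero_add, Matrix.mul_one]

theorem zha_simon_column_update_exact_general {m n s k : ℕ}
    (B : Matrix (Fin m) (Fin n) ℂ) (E : Matrix (Fin m) (Fin s) ℂ)
    (Uk : Matrix (Fin m) (Fin k) ℂ) (Vk : Matrix (Fin n) (Fin k) ℂ) (σk : Fin k → ℝ)
    (hB : B = Uk * diagonal (fun i => (σk i : ℂ)) * Vkᴴ)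
    (Q : Matrix (Fin m) (Fin s) ℂ) (R : Matrix (Fin s) (Fin s) ℂ)
    (hQR : (1 - Uk * Ukᴴ) * E = Q * R) :
    fromCols B E =
      fromCols Uk Q *
        fromBlocks (diagonal (fun i => (σk i : ℂ))) (Ukᴴ * E) 0 R *
        fromBlocks Vkᴴ 0 0 (1 : Matrix (Fin s) (Fin s) ℂ) := by
  subst hB
  exact fromCols_mul_mul_eq_of_residual_eq _ _ _ _ _ _ _ hQR

/-- Zha–Simon column update factorization: if `B = U_kΣ_kV_kᴴ` has rank exactly `k` and
`(I - U_kU_kᴴ)E = QR`, then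
`[B, E] = [U_k, Q] · [[Σ_k, U_kᴴE],[0, R]] · [[V_kᴴ, 0],[0, I_s]]`; hence the column-update
Zha–Simon scheme is exact. -/
theorem zha_simon_column_update_exact {m n s k : ℕ}
    (B : Matrix (Fin m) (Fin n) ℂ) (E : Matrix (Fin m) (Fin s) ℂ)
    (Uk : Matrix (Fin m) (Fin k) ℂ) (Vk : Matrix (Fin n) (Fin k) ℂ) (σk : Fin k → ℝ)
    (hUk : Ukᴴ * Uk = 1) (hVk : Vkᴴ * Vk = 1)
    (hB : B = Uk * diagonal (fun i => (σk i : ℂ)) * Vkᴴ)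
    (hrank : B.rank = k)
    (Q : Matrix (Fin m) (Fin s) ℂ) (R : Matrix (Fin s) (Fin s) ℂ)
    (hQ : Qᴴ * Q = 1)
    (hQR : (1 - Uk * Ukᴴ) * E = Q * R) :
    fromCols B E =
      fromCols Uk Q *
        fromBlocks (diagonal (fun i => (σk i : ℂ))) (Ukᴴ * E) 0 R *
        fromBlocks Vkᴴ 0 0 (1 : Matrix (Fin s) (Fin s) ℂ) :=
  zha_simon_column_update_exact_general B E Uk Vk σk hB Q R hQR
end
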